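/- (Explicit form of the dual Abel transform.) For every even function F : ℤ → ℂ (F(−k) = F(k)) and every n ≥ 1: (1/δ(n))·Σ_{x : |x| = n} q^(h(x)/2)·F(h(x)) = (2q/(q+1))·q^(−n/2)·F(n) + ((q−1)/(q+1))·q^(−n/2)·Σ_{k : −n < k < n, k ≡ n (mod 2)} F(k), while for n = 0 the left-hand side equals F(0). -/

import Mathlib

open scoped BigOperators

/-- A homogeneous tree of degree `q + 1`: a connected acyclic simple graph in which
every vertex has exactly `q + 1` neighbours. Spheres for the graph distance are finite. -/
structure HomTree (q : ℕ) where
  V : Type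
  G : SimpleGraph V
  conn : G.Connected
  acyclic : G.IsAcyclic
  sphereFin : ∀ (x : V) (n : ℕ), {y : V | G.dist x y = n}.Finite
  nbrFin : ∀ x : V, {y : V | G.Adj x y}.Finite
  degree : ∀ x : V, (nbrFin x).toFinset.card = q + 1

namespace HomTree

variable {q : ℕ}

/-- The sphere `S(x,n)` as a finite set. -/
noncomputable def sphere (T : HomTree q) (x : T.V) (n : ℕ) : Finset T.V :=
  (T.sphereFin x n).toFinset

/-- The volume `δ(n)` of spheres. -/
def delta (q n : ℕ) : ℕ := if n = 0 then 1 else (q + 1) * q ^ (n - 1)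

/-- The combinatorial Laplacian on the tree. -/
noncomputable def lap (T : HomTree q) (f : T.V → ℂ) (x : T.V) : ℂ :=
  f x - (1 / ((q : ℂ) + 1)) * ∑ y ∈ T.sphere x 1, f y

/-- Spherical means. -/
noncomputable def sphMean (T : HomTree q) (f : T.V → ℂ) (x : T.V) (n : ℕ) : ℂ :=
  (1 / (delta q n : ℂ)) * ∑ y ∈ T.sphere x n, f y

/-- Real powers of `q`, as a complex number. -/
noncomputable def qpow (q : ℕ) (x : ℝ) : ℂ := (((q : ℝ) ^ x : ℝ) : ℂ)

/-- `γ = 2 / (q^{1/2} + q^{-1/2})`. -/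
noncomputable def gam (q : ℕ) : ℝ := 2 / ((q : ℝ) ^ ((1 : ℝ)/2) + (q : ℝ) ^ (-(1 : ℝ)/2))

/-- The combinatorial Laplacian on `ℤ`. -/
noncomputable def lapZ (φ : ℤ → ℂ) (m : ℤ) : ℂ := φ m - (φ (m + 1) + φ (m - 1)) / 2

lemma ball_finite (T : HomTree q) (x : T.V) (n : ℕ) :
    {y : T.V | T.G.dist x y ≤ n}.Finite := by
  have h : {y : T.V | T.G.dist x y ≤ n} ⊆ ⋃ m ∈ Set.Iic n, {y : T.V | T.G.dist x y = m} := by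
    intro y hy
    exact Set.mem_biUnion hy rfl
  exact (((Set.finite_Iic n)).biUnion fun m _ => T.sphereFin x m).subset h

/-- The ball `B(x,n)` as a finite set. -/
noncomputable def ball (T : HomTree q) (x : T.V) (n : ℕ) : Finset T.V :=
  (T.ball_finite x n).toFinset

/-- The operator `M_n` (with `M_n = 0` for `n < 0`). -/
noncomputable def Mop (T : HomTree q) (n : ℤ) (f : T.V → ℂ) (x : T.V) : ℂ :=
  if 0 ≤ n then
    qpow q (-(n : ℝ) / 2) *
      ∑ y ∈ (T.ball x n.toNat).filter (fun y => (n.toNat - T.G.dist x y) % 2 = 0), f y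
  else 0

/-- The operator `C_n = (M_{|n|} - M_{|n|-2})/2`, `C_0 = Id`. -/
noncomputable def Cop (T : HomTree q) (n : ℤ) (f : T.V → ℂ) (x : T.V) : ℂ :=
  if n = 0 then f x else (Mop T |n| f x - Mop T (|n| - 2) f x) / 2

/-- The operator `S_n = sign(n) · M_{|n|-1}`. -/
noncomputable def Sop (T : HomTree q) (n : ℤ) (g : T.V → ℂ) (x : T.V) : ℂ :=
  (n.sign : ℂ) * Mop T (|n| - 1) g x

/-- `u` solves the shifted wave equation on the tree. -/
def IsWaveSol (T : HomTree q) (u : T.V → ℤ → ℂ) : Prop :=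
  ∀ (x : T.V) (n : ℤ),
    u x (n + 1) + u x (n - 1) = qpow q (-(1 : ℝ)/2) * ∑ y ∈ T.sphere x 1, u y n

/-- `u` solves the Cauchy problem for the shifted wave equation with data `f`, `g`. -/
def IsCauchy (T : HomTree q) (f g : T.V → ℂ) (u : T.V → ℤ → ℂ) : Prop :=
  IsWaveSol T u ∧ (∀ x, u x 0 = f x) ∧ ∀ x, (u x 1 - u x (-1)) / 2 = g x

/-- Kinetic energy. -/
noncomputable def kinetic (T : HomTree q) (u : T.V → ℤ → ℂ) (n : ℤ) : ℝ :=
  (1/2) * ∑' x : T.V, ‖(u x (n + 1) - u x (n - 1)) / 2‖ ^ 2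

/-- Potential energy. -/
noncomputable def potential (T : HomTree q) (u : T.V → ℤ → ℂ) (n : ℤ) : ℝ :=
  (1 / (4 * (q : ℝ))) * ∑' p : T.V × T.V,
      (if T.G.dist p.1 p.2 = 2 then ‖(u p.1 n - u p.2 n) / 2‖ ^ 2 else 0)
    - (((q : ℝ) - 1) ^ 2 / (8 * (q : ℝ))) * ∑' x : T.V, ‖u x n‖ ^ 2

/-- The two-step Laplacian. -/
noncomputable def lap2 (T : HomTree q) (f : T.V → ℂ) (x : T.V) : ℂ :=
  f x - (1 / ((q : ℂ) * ((q : ℂ) + 1))) * ∑ y ∈ T.sphere x 2, f y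

end HomTree

/-!
The height `H` is a Busemann function: every vertex has exactly one neighbour one level up and
`q` neighbours one level down. Together with the sphere structure of the tree (a vertex of
`S(o, n + 1)` has one neighbour in `S(o, n)`, a vertex of `S(o, n)` has `q`, or `q + 1` if
`n = 0`, neighbours in `S(o, n + 1)`), this gives a two-step recursion in `n` for
`∑_{x ∈ S(o, n)} g (H x)`, for every `g : ℤ → R`. The explicit `horocyclicSum` obeys the same
recursion and initial values, so `S(o, n)` has one vertex of height `n`, `q ^ n` of height `-n`
and `(q - 1) q ^ j` of height `n - 2 - 2 j`. Taking `g k = q ^ (k / 2) F k` and using that `F` is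
even gives the formula.
-/

open Finset

namespace SimpleGraph

variable {V : Type*} {G : SimpleGraph V}

theorem IsTree.existsUnique_adj_dist_eq_of_dist_eq_add_one (hG : G.IsTree) {u v : V} {n : ℕ}
    (h : G.dist u v = n + 1) : ∃! w, G.Adj v w ∧ G.dist u w = n := by
  classical
  obtain ⟨p, hp, hpl⟩ := hG.connected.exists_path_of_dist u v
  have hnil : ¬ p.Nil := by
    rw [← Walk.length_eq_zero_iff]; omega
  refine ⟨p.penultimate, ⟨(p.adj_penultimate hnil).symm, ?_⟩, ?_⟩
  · have hle := dist_le p.dropLast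
    have htri := hG.connected.dist_triangle (u := u) (v := p.penultimate) (w := v)
    rw [dist_eq_one_iff_adj.mpr (p.adj_penultimate hnil)] at htri
    rw [Walk.length_dropLast] at hle
    omega
  · rintro w ⟨hvw, hw⟩
    obtain ⟨r, hr, hrl⟩ := hG.connected.exists_path_of_dist u w
    -- the shortest path to `w`, extended by the edge `w v`, is the unique path to `v`
    have hv : v ∉ r.support := fun hv => by
      have := dist_le (r.takeUntil v hv)
      have := r.length_takeUntil_le_length hv
      omega
    have hwp : w ∈ p.support :=
      hG.isAcyclic.mem_support_of_ne_mem_support_of_adj_of_isPath hp hr hvw hv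
    simpa [eq_comm] using congrArg Walk.penultimate (hG.isAcyclic.path_concat hr hp hvw.symm hwp)

end SimpleGraph

section HorocyclicSum

variable {R : Type*} [CommRing R]

def horocyclicSum (q n : ℕ) (g : ℤ → R) : R :=
  g n + (q : R) ^ n * g (-n) +
    ((q : R) - 1) * ∑ j ∈ range (n - 1), (q : R) ^ j * g (n - 2 - 2 * j)

theorem horocyclicSum_add_three (q k : ℕ) (g : ℤ → R) :
    horocyclicSum q (k + 3) g + q * horocyclicSum q (k + 1) g =
      horocyclicSum q (k + 2) (fun h => g (h + 1) + q * g (h - 1)) := by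
  simp only [horocyclicSum, show k + 3 - 1 = k + 1 + 1 from rfl, show k + 2 - 1 = k + 1 from rfl,
    Nat.add_sub_cancel, sum_range_succ, mul_add, sum_add_distrib]
  push_cast
  ring_nf
  simp only [mul_assoc, ← mul_sum]
  ring

end HorocyclicSum

theorem sum_range_eq_sum_Ioo_filter_emod_two {M : Type*} [AddCommMonoid M] (F : ℤ → M)
    (n : ℕ) :
    ∑ j ∈ range (n - 1), F (n - 2 - 2 * j) =
      ∑ k ∈ Ioo (-(n : ℤ)) n with k % 2 = (n : ℤ) % 2, F k := by
  refine sum_nbij' (fun j => n - 2 - 2 * j) (fun k => ((n - 2 - k) / 2).toNat)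
    ?_ ?_ ?_ ?_ fun _ _ => rfl <;> intro x hx <;> simp only [mem_Ioo, mem_range,
      mem_filter] at hx ⊢ <;> omega

namespace HomTree

variable {q : ℕ}

theorem qpow_add_natCast (hq : 0 < q) (x : ℝ) (m : ℕ) : qpow q (x + m) = q ^ m * qpow q x := by
  rw [qpow, qpow, Real.rpow_add (by positivity), Real.rpow_natCast]
  push_cast
  ring

theorem horocyclicSum_qpow_mul (hq : 0 < q) {F : ℤ → ℂ} (hF : ∀ k, F (-k) = F k) (m : ℕ) :
    horocyclicSum q (m + 1) (fun k => qpow q ((k : ℝ) / 2) * F k) =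
      q ^ m * qpow q (-((m + 1 : ℕ) : ℝ) / 2) *
        (2 * q * F (m + 1 : ℕ) + (q - 1) *
          ∑ k ∈ Ioo (-((m + 1 : ℕ) : ℤ)) (m + 1 : ℕ) with k % 2 = ((m + 1 : ℕ) : ℤ) % 2,
            F k) := by
  have hterm (j : ℕ) : (q : ℂ) ^ j * (qpow q ((((m + 1 : ℕ) - 2 - 2 * j : ℤ) : ℝ) / 2) *
      F ((m + 1 : ℕ) - 2 - 2 * j)) =
      q ^ m * qpow q (-((m + 1 : ℕ) : ℝ) / 2) * F ((m + 1 : ℕ) - 2 - 2 * j) := by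
    rw [← mul_assoc, ← qpow_add_natCast hq, ← qpow_add_natCast hq]
    congr 2
    push_cast
    ring
  have htop : qpow q (((m + 1 : ℕ) : ℝ) / 2) =
      q ^ (m + 1) * qpow q (-((m + 1 : ℕ) : ℝ) / 2) := by
    rw [← qpow_add_natCast hq]
    congr 1
    push_cast
    ring
  simp only [horocyclicSum, hterm, hF, ← mul_sum, ← sum_range_eq_sum_Ioo_filter_emod_two, htop,
    Int.cast_neg, Int.cast_natCast]
  ring

variable (T : HomTree q)

theorem isTree : T.G.IsTree := ⟨T.conn, T.acyclic⟩

theorem mem_sphere {x y : T.V} {n : ℕ} : y ∈ T.sphere x n ↔ T.G.dist x y = n :=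
  Set.Finite.mem_toFinset _

theorem mem_sphere_one {x y : T.V} : y ∈ T.sphere x 1 ↔ T.G.Adj x y :=
  T.mem_sphere.trans SimpleGraph.dist_eq_one_iff_adj

theorem card_sphere_one (x : T.V) : #(T.sphere x 1) = q + 1 := by
  rw [← T.degree x]
  congr 1
  ext y
  rw [mem_sphere_one, Set.Finite.mem_toFinset]
  rfl

theorem sphere_zero (x : T.V) : T.sphere x 0 = {x} := by
  ext y
  rw [mem_sphere, mem_singleton, T.conn.dist_eq_zero_iff, eq_comm]

theorem card_filter_sphere_one_dist_eq_of_dist_eq_add_one {o z : T.V} {n : ℕ}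
    (h : T.G.dist o z = n + 1) : #{y ∈ T.sphere z 1 | T.G.dist o y = n} = 1 := by
  obtain ⟨w, hw, huniq⟩ := T.isTree.existsUnique_adj_dist_eq_of_dist_eq_add_one h
  rw [card_eq_one]
  refine ⟨w, eq_singleton_iff_unique_mem.mpr ⟨?_, fun y hy => ?_⟩⟩
  · exact mem_filter.mpr ⟨T.mem_sphere_one.mpr hw.1, hw.2⟩
  · rw [mem_filter, mem_sphere_one] at hy
    exact huniq y hy

theorem card_filter_sphere_one_dist_eq_add_one {o z : T.V} {n : ℕ} (h : T.G.dist o z = n) :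
    #{y ∈ T.sphere z 1 | T.G.dist o y = n + 1} = if n = 0 then q + 1 else q := by
  have hsplit := card_filter_add_card_filter_not (s := T.sphere z 1)
    (fun y => T.G.dist o y = n + 1)
  rw [card_sphere_one] at hsplit
  have hnot : {y ∈ T.sphere z 1 | ¬ T.G.dist o y = n + 1} =
      {y ∈ T.sphere z 1 | T.G.dist o y + 1 = n} := by
    refine filter_congr fun y hy => ?_
    have := T.isTree.dist_eq_dist_add_one_of_adj o (T.mem_sphere_one.mp hy)
    omega
  rw [hnot] at hsplit
  split_ifs with hn
  · subst hn
    simp only [Nat.add_eq_zero_iff, one_ne_zero, and_false, filter_false, card_empty] at hsplit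
    omega
  · obtain ⟨m, rfl⟩ := Nat.exists_eq_add_one_of_ne_zero hn
    simp only [Nat.add_right_cancel_iff] at hsplit
    rw [ T.card_filter_sphere_one_dist_eq_of_dist_eq_add_one h] at hsplit
    omega

theorem sum_sphere_sum_filter_sphere_one {M : Type*} [AddCommMonoid M] (o : T.V) (a b : ℕ)
    (f : T.V → M) :
    ∑ y ∈ T.sphere o a, ∑ z ∈ T.sphere y 1 with T.G.dist o z = b, f z =
      ∑ z ∈ T.sphere o b, #{y ∈ T.sphere z 1 | T.G.dist o y = a} • f z := by
  simp_rw [← sum_const]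
  refine sum_comm' fun y z => ?_
  simp only [mem_filter, mem_sphere, SimpleGraph.dist_eq_one_iff_adj]
  rw [SimpleGraph.adj_comm]
  tauto

theorem sum_sphere_sum_sphere_one {M : Type*} [AddCommMonoid M] (o : T.V) (n : ℕ)
    (f : T.V → M) :
    ∑ y ∈ T.sphere o (n + 1), ∑ z ∈ T.sphere y 1, f z =
      ∑ z ∈ T.sphere o (n + 2), f z +
        (if n = 0 then q + 1 else q) • ∑ z ∈ T.sphere o n, f z := by
  have hsplit : ∀ y ∈ T.sphere o (n + 1), ∑ z ∈ T.sphere y 1, f z =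
      ∑ z ∈ T.sphere y 1 with T.G.dist o z = n + 2, f z +
        ∑ z ∈ T.sphere y 1 with T.G.dist o z = n, f z := by
    intro y hy
    rw [← sum_filter_add_sum_filter_not _ (fun z => T.G.dist o z = n + 2)]
    congr 2
    refine filter_congr fun z hz => ?_
    have := T.isTree.dist_eq_dist_add_one_of_adj o (T.mem_sphere_one.mp hz)
    rw [T.mem_sphere.mp hy] at this
    omega
  rw [sum_congr rfl hsplit, sum_add_distrib, sum_sphere_sum_filter_sphere_one,
    sum_sphere_sum_filter_sphere_one, smul_sum]
  congr 1
  · refine sum_congr rfl fun z hz => ?_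
    rw [T.card_filter_sphere_one_dist_eq_of_dist_eq_add_one (T.mem_sphere.mp hz), one_smul]
  · refine sum_congr rfl fun z hz => ?_
    rw [T.card_filter_sphere_one_dist_eq_add_one (T.mem_sphere.mp hz)]

def IsBusemann (ω : ℤ → T.V) (H : T.V → ℤ) : Prop :=
  ∀ x : T.V, ∀ᶠ n : ℕ in Filter.atTop, (n : ℤ) - (T.G.dist x (ω (n : ℤ)) : ℤ) = H x

namespace IsBusemann

variable {T} {ω : ℤ → T.V} {H : T.V → ℤ} (hH : T.IsBusemann ω H)
include hH

theorem apply_eq_zero (hω : ∀ n : ℕ, T.G.dist (ω 0) (ω n) = n) : H (ω 0) = 0 := by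
  obtain ⟨n, hn⟩ := (hH (ω 0)).exists
  rw [hω n] at hn
  omega

theorem apply_eq_add_one_or_eq_sub_one_of_adj {y z : T.V} (hyz : T.G.Adj y z) :
    H z = H y + 1 ∨ H z = H y - 1 := by
  obtain ⟨n, hy, hz⟩ := ((hH y).and (hH z)).exists
  have := T.isTree.dist_eq_dist_add_one_of_adj (ω n) hyz
  rw [SimpleGraph.dist_comm] at hy hz
  omega

theorem card_filter_sphere_one_eq_add_one (y : T.V) :
    #{z ∈ T.sphere y 1 | H z = H y + 1} = 1 := by
  classical
  -- far along the ray, `H z = H y + 1` singles out the neighbour of `y` closer to `ω n`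
  obtain ⟨n, hH_near, hn⟩ := (((Filter.eventually_all_finset (insert y (T.sphere y 1))).mpr
    fun z _ => hH z).and (Filter.eventually_gt_atTop (H y).toNat)).exists
  have hy := hH_near y (mem_insert_self _ _)
  rw [SimpleGraph.dist_comm] at hy
  obtain ⟨m, hm⟩ : ∃ m, T.G.dist (ω n) y = m + 1 := ⟨T.G.dist (ω n) y - 1, by omega⟩
  refine (congrArg card (filter_congr fun z hz => ?_)).trans
    (T.card_filter_sphere_one_dist_eq_of_dist_eq_add_one hm)
  have := hH_near z (mem_insert_of_mem hz)
  rw [SimpleGraph.dist_comm] at this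
  omega

theorem sum_sphere_one {M : Type*} [AddCommMonoid M] (g : ℤ → M) (y : T.V) :
    ∑ z ∈ T.sphere y 1, g (H z) = g (H y + 1) + q • g (H y - 1) := by
  classical
  have hcard := card_filter_add_card_filter_not (s := T.sphere y 1) (fun z => H z = H y + 1)
  rw [T.card_sphere_one, hH.card_filter_sphere_one_eq_add_one] at hcard
  rw [← sum_filter_add_sum_filter_not _ (fun z => H z = H y + 1),
    sum_congr rfl fun z hz => by rw [(mem_filter.mp hz).2], sum_const,
    hH.card_filter_sphere_one_eq_add_one, one_smul,
    sum_congr rfl fun z hz => ?_, sum_const, (by omega : #_ = q)]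
  obtain ⟨hz, hne⟩ := mem_filter.mp hz
  rw [(hH.apply_eq_add_one_or_eq_sub_one_of_adj (T.mem_sphere_one.mp hz)).resolve_left hne]

theorem sum_sphere_add_two {M : Type*} [AddCommMonoid M] (g : ℤ → M) (o : T.V) (n : ℕ) :
    ∑ x ∈ T.sphere o (n + 2), g (H x) +
        (if n = 0 then q + 1 else q) • ∑ x ∈ T.sphere o n, g (H x) =
      ∑ x ∈ T.sphere o (n + 1), (g (H x + 1) + q • g (H x - 1)) := by
  rw [← T.sum_sphere_sum_sphere_one]
  exact sum_congr rfl fun y _ => hH.sum_sphere_one g y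

theorem sum_sphere_eq_horocyclicSum {R : Type*} [CommRing R] {o : T.V} (ho : H o = 0) (n : ℕ)
    (g : ℤ → R) :
    ∑ x ∈ T.sphere o (n + 1), g (H x) = horocyclicSum q (n + 1) g := by
  have hrec (n : ℕ) (g : ℤ → R) := hH.sum_sphere_add_two g o n
  simp only [nsmul_eq_mul] at hrec
  have hS0 (g : ℤ → R) : ∑ x ∈ T.sphere o 0, g (H x) = g 0 := by
    rw [sphere_zero, sum_singleton, ho]
  have hS1 (g : ℤ → R) : ∑ x ∈ T.sphere o 1, g (H x) = horocyclicSum q 1 g := by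
    rw [hH.sum_sphere_one, ho, horocyclicSum, nsmul_eq_mul]
    simp
  suffices h : ∀ k (g : ℤ → R),
      ∑ x ∈ T.sphere o (k + 1), g (H x) = horocyclicSum q (k + 1) g ∧
      ∑ x ∈ T.sphere o (k + 2), g (H x) = horocyclicSum q (k + 2) g from (h n g).1
  intro k
  induction k with
  | zero =>
    refine fun g => ⟨hS1 g, ?_⟩
    have h := hrec 0 g
    have h1 := hS1 fun h => g (h + 1) + q * g (h - 1)
    simp only [zero_add, if_pos, hS0] at h
    rw [h1] at h
    rw [eq_sub_of_add_eq h]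
    simp only [horocyclicSum, zero_add, Nat.reduceSub, sum_range_one, sum_range_zero]
    push_cast
    ring_nf
  | succ k ih =>
    refine fun g => ⟨(ih g).2, ?_⟩
    have h := hrec (k + 1) g
    have h2 := (ih fun h => g (h + 1) + q * g (h - 1)).2
    rw [(ih g).1, if_neg k.succ_ne_zero, h2] at h
    rw [eq_sub_of_add_eq h, ← horocyclicSum_add_three]
    ring

end IsBusemann

end HomTree

open HomTree in
/-- explicit form of the dual Abel transform. -/
theorem stmt6 {q : ℕ} (hq : 2 ≤ q) (T : HomTree q) (o : T.V) (ω : ℤ → T.V)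
    (hω : ∀ i j : ℤ, (T.G.dist (ω i) (ω j) : ℤ) = |i - j|) (hω0 : ω 0 = o)
    (H : T.V → ℤ)
    (hH : ∀ x : T.V, ∀ᶠ n : ℕ in Filter.atTop,
      (n : ℤ) - (T.G.dist x (ω (n : ℤ)) : ℤ) = H x)
    (F : ℤ → ℂ) (hF : ∀ k : ℤ, F (-k) = F k) :
    ((1 / (HomTree.delta q 0 : ℂ)) *
        ∑ x ∈ T.sphere o 0, HomTree.qpow q ((H x : ℝ) / 2) * F (H x) = F 0) ∧
    ∀ n : ℕ, 1 ≤ n →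
      (1 / (HomTree.delta q n : ℂ)) *
          ∑ x ∈ T.sphere o n, HomTree.qpow q ((H x : ℝ) / 2) * F (H x) =
        (2 * (q : ℂ) / ((q : ℂ) + 1)) * HomTree.qpow q (-(n : ℝ) / 2) * F n +
        (((q : ℂ) - 1) / ((q : ℂ) + 1)) * HomTree.qpow q (-(n : ℝ) / 2) *
          ∑ k ∈ (Finset.Ioo (-(n : ℤ)) (n : ℤ)).filter (fun k => k % 2 = (n : ℤ) % 2),
            F k := by
  subst hω0
  have hB : T.IsBusemann ω H := hH
  have hH0 : H (ω 0) = 0 := hB.apply_eq_zero fun n => by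
    simpa using hω 0 n
  refine ⟨?_, fun n hn => ?_⟩
  · simp [sphere_zero, hH0, delta, qpow]
  obtain ⟨m, rfl⟩ := Nat.exists_eq_add_of_le' hn
  rw [hB.sum_sphere_eq_horocyclicSum hH0 m fun k => qpow q ((k : ℝ) / 2) * F k,
    horocyclicSum_qpow_mul (by omega) hF, delta, if_neg m.succ_ne_zero]
  have hq0 : (q : ℂ) ≠ 0 := by exact_mod_cast (by omega : q ≠ 0)
  have hq1 : (q : ℂ) + 1 ≠ 0 := by exact_mod_cast q.succ_ne_zero
  push_cast
  field_simp
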